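/- If F ∈ 𝓙 then F̄ is weakly asymptotically equivalent to the tail of its n-fold convolution F^{n*} for every n ≥ 1 (0 < liminf F̄(x)/F̄^{n*}(x) ≤ limsup F̄(x)/F̄^{n*}(x) < ∞), and consequently F^{n*} ∈ 𝓙. -/

import Mathlib

open MeasureTheory Filter Set

/-- Tail of a distribution: `F̄(x) = μ(x, ∞)`. -/
noncomputable def tail (μ : Measure ℝ) (x : ℝ) : ℝ := (μ (Set.Ioi x)).toReal

/-- Conditional probability `P(A | X₁ + X₂ > x)` for two i.i.d. variables with law `μ`. -/
noncomputable def condPair (μ : Measure ℝ) (A : Set (ℝ × ℝ)) (x : ℝ) : ℝ :=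
  ((μ.prod μ) (A ∩ {p | x < p.1 + p.2})).toReal / ((μ.prod μ) {p | x < p.1 + p.2}).toReal

/-- The class 𝓙 : `lim_{K→∞} liminf_{x→∞} P(max(X₁,X₂) > x − K | X₁ + X₂ > x) = 1`. -/
def MemJ (μ : Measure ℝ) : Prop :=
  Tendsto (fun K : ℝ =>
      liminf (fun x : ℝ => condPair μ {p | x - K < max p.1 p.2} x) atTop)
    atTop (nhds 1)

/-- The class 𝓙 (equivalent form): for every nonnegative, unbounded, nondecreasing `g`,
`lim_{x→∞} P(min(X₁,X₂) > g(x) | X₁ + X₂ > x) = 0`. -/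
def MemJg (μ : Measure ℝ) : Prop :=
  ∀ g : ℝ → ℝ, (∀ x, 0 ≤ g x) → Monotone g → (∀ M, ∃ x, M < g x) →
    Tendsto (fun x : ℝ => condPair μ {p | g x < min p.1 p.2} x) atTop (nhds 0)

/-- Tail of the two-fold convolution: `F̄²*(x) = P(X₁ + X₂ > x)`. -/
noncomputable def tail2 (μ : Measure ℝ) (x : ℝ) : ℝ := ((μ.prod μ) {p | x < p.1 + p.2}).toReal

/-- Weak asymptotic tail-equivalence `F̄ ≍ Ḡ`:
`0 < liminf F̄(x)/Ḡ(x) ≤ limsup F̄(x)/Ḡ(x) < ∞`. -/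
def WeakTailEquiv (μ ν : Measure ℝ) : Prop :=
  (∃ c : ℝ, 0 < c ∧ ∀ᶠ x in atTop, c * tail ν x ≤ tail μ x) ∧
  (∃ C : ℝ, ∀ᶠ x in atTop, tail μ x ≤ C * tail ν x)

/-- Convolution of two laws on ℝ. -/
noncomputable def conv (μ ν : Measure ℝ) : Measure ℝ :=
  Measure.map (fun p : ℝ × ℝ => p.1 + p.2) (μ.prod ν)

/-- `n`-fold convolution `F^{n*}`. -/
noncomputable def nconv (μ : Measure ℝ) : ℕ → Measure ℝ
  | 0 => Measure.dirac 0
  | n + 1 => conv (nconv μ n) μ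

open scoped ENNReal NNReal Topology

/-!
Taking `K` large in the definition of `𝓙` gives `F̄²*(x) ≤ 4 F̄(x - K)`, hence
`F̄(x - a) F̄(a + K) ≤ F̄²*(x + K) ≤ 4 F̄(x)`: `F` is O-long-tailed and `F̄²* = O(F̄)`.
Splitting `F̄^{(n+1)*}(x) = ∫ F̄^{n*}(x - y) dF(y)` at `y = x - M` then gives `F̄^{n*} = O(F̄)`
by induction, while `F̄ ≤ F̄^{n*}` holds because the summands are nonnegative.

Membership in `𝓙` then passes to any `G` with `Ḡ ≍ F̄`. If `Y₁ + Y₂ > x` while both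
`Yᵢ ≤ x - K`, one summand lies in `(x/2, x - K]`; replacing the law of each summand by `F` in
turn (conditioning on the other one) costs a constant factor and bounds the probability of
this event by a multiple of `P(min(X₁, X₂) > K, X₁ + X₂ > x)`, which is `o(F̄(x))` as
`K → ∞` when `F ∈ 𝓙`.
-/

lemma prod_swap_preimage {α β : Type*} [MeasurableSpace α] [MeasurableSpace β] (μ : Measure α)
    (ν : Measure β) [SFinite μ] [SFinite ν] {s : Set (β × α)} (hs : MeasurableSet s) :
    (μ.prod ν) (Prod.swap ⁻¹' s) = (ν.prod μ) s := by
  rw [← Measure.map_apply measurable_swap hs, Measure.prod_swap]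

lemma tendsto_measure_Ioi_atTop (μ : Measure ℝ) [IsFiniteMeasure μ] :
    Tendsto (fun K => μ (Ioi K)) atTop (𝓝 0) := by
  have := tendsto_measure_iInter_atTop (μ := μ) (s := fun r : ℝ => Ioi r)
    (fun _ => measurableSet_Ioi.nullMeasurableSet) (fun _ _ h => Ioi_subset_Ioi h)
    ⟨0, measure_ne_top _ _⟩
  have hempty : ⋂ r : ℝ, Ioi r = ∅ := iInter_eq_empty_iff.2 fun y => ⟨y, lt_irrefl y⟩
  simpa [Function.comp_def, hempty] using this

lemma prod_sum_gt_eq_lintegral (ν ρ : Measure ℝ) [SFinite ν] [SFinite ρ] (x : ℝ) :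
    (ν.prod ρ) {p | x < p.1 + p.2} = ∫⁻ b, ν (Ioi (x - b)) ∂ρ := by
  rw [Measure.prod_apply_symm (measurableSet_lt measurable_const (by fun_prop))]
  refine lintegral_congr fun b => congrArg ν ?_
  ext a
  simp [sub_lt_iff_lt_add]

lemma measure_Ioi_le_prod_sum_gt (ν ρ : Measure ℝ) [IsProbabilityMeasure ν] [SFinite ρ]
    (hν : ν (Iio 0) = 0) (x : ℝ) : ρ (Ioi x) ≤ (ν.prod ρ) {p | x < p.1 + p.2} := by
  have hν' : ν (Ici 0) = 1 := by
    rw [← compl_Iio, prob_compl_eq_one_sub measurableSet_Iio, hν, tsub_zero]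
  calc ρ (Ioi x) = (ν.prod ρ) (Ici 0 ×ˢ Ioi x) := by rw [Measure.prod_prod, hν', one_mul]
    _ ≤ (ν.prod ρ) {p | x < p.1 + p.2} := measure_mono fun p ⟨h₁, h₂⟩ => by
        simp only [mem_Ici, mem_Ioi] at h₁ h₂
        show x < p.1 + p.2
        linarith

lemma prod_le_mul_prod_of_tail_le (ρ σ σ' : Measure ℝ) [SFinite σ] [SFinite σ'] {A : Set ℝ}
    (hA : MeasurableSet A) {h : ℝ → ℝ} (hh : Measurable h) {C : ℝ≥0}
    (hC : ∀ a ∈ A, σ (Ioi (h a)) ≤ C * σ' (Ioi (h a))) :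
    (ρ.prod σ) {p | p.1 ∈ A ∧ h p.1 < p.2} ≤ C * (ρ.prod σ') {p | p.1 ∈ A ∧ h p.1 < p.2} := by
  have hS : MeasurableSet {p : ℝ × ℝ | p.1 ∈ A ∧ h p.1 < p.2} :=
    (measurable_fst hA).inter (measurableSet_lt (hh.comp measurable_fst) measurable_snd)
  rw [Measure.prod_apply hS, Measure.prod_apply hS, ← lintegral_const_mul' _ _ ENNReal.coe_ne_top]
  refine lintegral_mono fun a => ?_
  by_cases ha : a ∈ A
  · have hslice : Prod.mk a ⁻¹' {p : ℝ × ℝ | p.1 ∈ A ∧ h p.1 < p.2} = Ioi (h a) := by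
      ext b; simp [ha]
    rw [hslice]
    exact hC a ha
  · have hslice : Prod.mk a ⁻¹' {p : ℝ × ℝ | p.1 ∈ A ∧ h p.1 < p.2} = ∅ := by
      ext b; simp [ha]
    simp [hslice]

lemma tail_le_mul_tail_iff (μ ν : Measure ℝ) [IsFiniteMeasure μ] [IsFiniteMeasure ν] (c : ℝ≥0)
    (x : ℝ) : tail μ x ≤ c * tail ν x ↔ μ (Ioi x) ≤ c * ν (Ioi x) := by
  rw [tail, tail, ← ENNReal.toReal_le_toReal (measure_ne_top _ _)
    (ENNReal.mul_ne_top ENNReal.coe_ne_top (measure_ne_top _ _)), ENNReal.toReal_mul,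
    ENNReal.coe_toReal]

lemma weakTailEquiv_iff {μ ν : Measure ℝ} [IsFiniteMeasure μ] [IsFiniteMeasure ν] :
    WeakTailEquiv μ ν ↔ (∃ C : ℝ≥0, ∀ᶠ x in atTop, ν (Ioi x) ≤ C * μ (Ioi x)) ∧
      ∃ C : ℝ≥0, ∀ᶠ x in atTop, μ (Ioi x) ≤ C * ν (Ioi x) := by
  simp only [WeakTailEquiv, ← tail_le_mul_tail_iff]
  constructor
  · rintro ⟨⟨c, hc, hcν⟩, ⟨C, hC⟩⟩
    refine ⟨⟨c.toNNReal⁻¹, hcν.mono fun x hx => ?_⟩, ⟨C.toNNReal, hC.mono fun x hx => ?_⟩⟩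
    · rw [NNReal.coe_inv, Real.coe_toNNReal _ hc.le, ← div_eq_inv_mul, le_div_iff₀' hc]
      exact hx
    · exact hx.trans (mul_le_mul_of_nonneg_right (Real.le_coe_toNNReal C) ENNReal.toReal_nonneg)
  · rintro ⟨⟨C, hC⟩, ⟨C', hC'⟩⟩
    refine ⟨⟨(C + 1 : ℝ)⁻¹, by positivity, hC.mono fun x hx => ?_⟩, ⟨C', hC'⟩⟩
    rw [← div_eq_inv_mul, div_le_iff₀' (by positivity)]
    exact hx.trans (mul_le_mul_of_nonneg_right (by linarith) ENNReal.toReal_nonneg)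

lemma conv_apply_Ioi (ν ρ : Measure ℝ) (x : ℝ) :
    conv ν ρ (Ioi x) = (ν.prod ρ) {p | x < p.1 + p.2} :=
  Measure.map_apply (by fun_prop) measurableSet_Ioi

lemma conv_Iio_eq_zero (ν ρ : Measure ℝ) [SFinite ρ] (hν : ν (Iio 0) = 0) (hρ : ρ (Iio 0) = 0) :
    conv ν ρ (Iio 0) = 0 := by
  rw [conv, Measure.map_apply (by fun_prop) measurableSet_Iio]
  refine measure_mono_null (t := Iio 0 ×ˢ univ ∪ univ ×ˢ Iio 0) ?_ ?_
  · intro p hp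
    simp only [mem_preimage, mem_Iio] at hp
    by_contra h
    simp only [mem_union, mem_prod, mem_Iio, mem_univ, and_true, true_and, not_or, not_lt] at h
    linarith
  · simp [Measure.prod_prod, hν, hρ]

instance (μ : Measure ℝ) [IsProbabilityMeasure μ] (n : ℕ) : IsProbabilityMeasure (nconv μ n) := by
  induction n with
  | zero => exact inferInstanceAs (IsProbabilityMeasure (Measure.dirac 0))
  | succ n ih => exact inferInstanceAs (IsProbabilityMeasure (nconv μ n ∗ μ))

lemma nconv_Iio_eq_zero (μ : Measure ℝ) [IsProbabilityMeasure μ] (hμ : μ (Iio 0) = 0) (n : ℕ) :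
    nconv μ n (Iio 0) = 0 := by
  induction n with
  | zero => simp [nconv]
  | succ n ih => exact conv_Iio_eq_zero _ _ ih hμ

lemma measure_Ioi_le_nconv (μ : Measure ℝ) [IsProbabilityMeasure μ] (hμ : μ (Iio 0) = 0)
    {n : ℕ} (hn : 1 ≤ n) (x : ℝ) : μ (Ioi x) ≤ nconv μ n (Ioi x) := by
  obtain ⟨m, rfl⟩ := Nat.exists_eq_add_of_le' hn
  rw [nconv, conv_apply_Ioi]
  exact measure_Ioi_le_prod_sum_gt _ _ (nconv_Iio_eq_zero μ hμ m) x

noncomputable def sumTail (ρ : Measure ℝ) (x : ℝ) : ℝ≥0∞ :=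
  (ρ.prod ρ) {p | x < p.1 + p.2}

noncomputable def sumTailMaxLe (ρ : Measure ℝ) (K x : ℝ) : ℝ≥0∞ :=
  (ρ.prod ρ) {p | max p.1 p.2 ≤ x - K ∧ x < p.1 + p.2}

noncomputable def sumTailMinGt (ρ : Measure ℝ) (K x : ℝ) : ℝ≥0∞ :=
  (ρ.prod ρ) {p | K < min p.1 p.2 ∧ x < p.1 + p.2}

def IsEventuallySmall (f : ℝ → ℝ → ℝ≥0∞) (g : ℝ → ℝ≥0∞) : Prop :=
  ∀ ε : ℝ≥0, 0 < ε → ∀ᶠ K in atTop, ∀ᶠ x in atTop, f K x ≤ ε * g x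

lemma IsEventuallySmall.of_le_mul {f f' : ℝ → ℝ → ℝ≥0∞} {g g' : ℝ → ℝ≥0∞}
    (h : IsEventuallySmall f g) {D D' : ℝ≥0}
    (hf : ∀ᶠ K in atTop, ∀ᶠ x in atTop, f' K x ≤ D * f K x)
    (hg : ∀ᶠ x in atTop, g x ≤ D' * g' x) : IsEventuallySmall f' g' := by
  intro ε hε
  set δ := ε / (D * D' + 1)
  have hδ : D * δ * D' ≤ ε := by
    calc D * δ * D' = ε * (D * D' / (D * D' + 1)) := by ring
      _ ≤ ε := mul_le_of_le_one_right zero_le (div_le_one_of_le₀ le_self_add zero_le)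
  filter_upwards [h δ (by positivity), hf] with K hK hfK
  filter_upwards [hK, hfK, hg] with x h₁ h₂ h₃
  calc f' K x ≤ D * (δ * (D' * g' x)) := h₂.trans (by gcongr; exact h₁.trans (by gcongr))
    _ = ↑(D * δ * D') * g' x := by push_cast; ring
    _ ≤ ε * g' x := by gcongr

lemma sumTail_ne_zero (ρ : Measure ℝ) [SFinite ρ] (hρ : ∀ x, 0 < ρ (Ioi x)) (x : ℝ) :
    sumTail ρ x ≠ 0 := by
  refine (measure_mono (μ := ρ.prod ρ) (s := Ioi (x / 2) ×ˢ Ioi (x / 2)) ?_).trans_lt' ?_ |>.ne'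
  · rintro p ⟨h₁, h₂⟩
    simp only [mem_Ioi] at h₁ h₂
    show x < p.1 + p.2
    linarith
  · rw [Measure.prod_prod]
    exact ENNReal.mul_pos (hρ _).ne' (hρ _).ne'

lemma sumTail_eq_add (ρ : Measure ℝ) [SFinite ρ] (K x : ℝ) :
    sumTail ρ x = (ρ.prod ρ) ({p | x - K < max p.1 p.2} ∩ {p | x < p.1 + p.2})
      + sumTailMaxLe ρ K x := by
  have hmax : MeasurableSet {p : ℝ × ℝ | x - K < max p.1 p.2} :=
    measurableSet_lt measurable_const (measurable_fst.max measurable_snd)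
  have h := measure_inter_add_sdiff₀ (μ := ρ.prod ρ) {p : ℝ × ℝ | x < p.1 + p.2}
    hmax.nullMeasurableSet
  rw [inter_comm] at h
  rw [sumTail, ← h, sumTailMaxLe]
  congr 2
  ext p
  simp [and_comm]

lemma condPair_nonneg (ρ : Measure ℝ) (A : Set (ℝ × ℝ)) (x : ℝ) : 0 ≤ condPair ρ A x :=
  div_nonneg ENNReal.toReal_nonneg ENNReal.toReal_nonneg

lemma condPair_le_one (ρ : Measure ℝ) [IsFiniteMeasure ρ] (A : Set (ℝ × ℝ)) (x : ℝ) :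
    condPair ρ A x ≤ 1 :=
  div_le_one_of_le₀ (ENNReal.toReal_mono (measure_ne_top _ _) (measure_mono inter_subset_right))
    ENNReal.toReal_nonneg

lemma one_sub_le_condPair_iff (ρ : Measure ℝ) [IsProbabilityMeasure ρ] {K x : ℝ}
    (hx : sumTail ρ x ≠ 0) (ε : ℝ≥0) :
    1 - ε ≤ condPair ρ {p | x - K < max p.1 p.2} x ↔ sumTailMaxLe ρ K x ≤ ε * sumTail ρ x := by
  have hsplit := sumTail_eq_add ρ K x
  have hN : sumTailMaxLe ρ K x ≠ ∞ := measure_ne_top _ _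
  have hP : sumTail ρ x ≠ ∞ := measure_ne_top _ _
  have hpos : 0 < (sumTail ρ x).toReal := ENNReal.toReal_pos hx hP
  have hreal : (sumTail ρ x).toReal = ((ρ.prod ρ) ({p | x - K < max p.1 p.2}
      ∩ {p | x < p.1 + p.2})).toReal + (sumTailMaxLe ρ K x).toReal := by
    rw [hsplit, ENNReal.toReal_add (measure_ne_top _ _) hN]
  rw [← ENNReal.toReal_le_toReal hN (ENNReal.mul_ne_top ENNReal.coe_ne_top hP), ENNReal.toReal_mul,
    ENNReal.coe_toReal, condPair, ← sumTail, le_div_iff₀ hpos]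
  constructor <;> intro h <;> nlinarith

theorem memJ_iff_isEventuallySmall (ρ : Measure ℝ) [IsProbabilityMeasure ρ]
    (hρ : ∀ᶠ x in atTop, sumTail ρ x ≠ 0) :
    MemJ ρ ↔ IsEventuallySmall (sumTailMaxLe ρ) (sumTail ρ) := by
  have hbdd (K : ℝ) : IsBoundedUnder (· ≥ ·) atTop
      (fun x => condPair ρ {p | x - K < max p.1 p.2} x) :=
    isBoundedUnder_of ⟨0, fun x => condPair_nonneg ρ _ x⟩
  have hcobdd (K : ℝ) : IsCoboundedUnder (· ≥ ·) atTop
      (fun x => condPair ρ {p | x - K < max p.1 p.2} x) :=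
    isCoboundedUnder_ge_of_le atTop fun x => condPair_le_one ρ _ x
  constructor
  · intro hJ ε hε
    filter_upwards [hJ.eventually (eventually_gt_nhds (sub_lt_self (1 : ℝ) hε))] with K hK
    filter_upwards [eventually_lt_of_lt_liminf hK (hbdd K), hρ] with x hx hx₀
    exact (one_sub_le_condPair_iff ρ hx₀ ε).1 hx.le
  · intro h
    refine tendsto_order.2 ⟨fun a ha => ?_, fun a ha => Eventually.of_forall fun K => ?_⟩
    · set ε := ((1 - a) / 2).toNNReal
      have hε : (ε : ℝ) = (1 - a) / 2 := Real.coe_toNNReal _ (by linarith)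
      filter_upwards [h ε (Real.toNNReal_pos.2 (by linarith))] with K hK
      refine lt_of_lt_of_le (b := 1 - (ε : ℝ)) (by linarith) (le_liminf_of_le (hcobdd K) ?_)
      filter_upwards [hK, hρ] with x hx hx₀
      exact (one_sub_le_condPair_iff ρ hx₀ ε).2 hx
    · exact (liminf_le_of_frequently_le (Frequently.of_forall fun x => condPair_le_one ρ _ x)
        (hbdd K)).trans_lt ha

namespace MemJ

variable {μ : Measure ℝ} [IsProbabilityMeasure μ]

lemma isEventuallySmall (hJ : MemJ μ) (hub : ∀ x, 0 < μ (Ioi x)) :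
    IsEventuallySmall (sumTailMaxLe μ) (sumTail μ) :=
  (memJ_iff_isEventuallySmall μ (Eventually.of_forall (sumTail_ne_zero μ hub))).1 hJ

lemma exists_sumTail_le (hJ : MemJ μ) (hub : ∀ x, 0 < μ (Ioi x)) :
    ∃ K, ∀ᶠ x in atTop, sumTail μ x ≤ 4 * μ (Ioi (x - K)) := by
  obtain ⟨K, hK⟩ := (hJ.isEventuallySmall hub 2⁻¹ (by norm_num)).exists
  refine ⟨K, ?_⟩
  filter_upwards [hK] with x hx
  have hbig : (μ.prod μ) ({p | x - K < max p.1 p.2} ∩ {p | x < p.1 + p.2})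
      ≤ 2 * μ (Ioi (x - K)) :=
    calc _ ≤ (μ.prod μ) (Ioi (x - K) ×ˢ univ ∪ univ ×ˢ Ioi (x - K)) :=
          measure_mono fun p hp => by simpa [lt_max_iff] using hp.1
      _ ≤ 2 * μ (Ioi (x - K)) := (measure_union_le _ _).trans_eq (by simp [two_mul])
  rw [ENNReal.coe_inv_two] at hx
  set h := 2⁻¹ * sumTail μ x
  have hP : sumTail μ x = h + h := by rw [← add_mul, ENNReal.inv_two_add_inv_two, one_mul]
  have hh : h ≤ 2 * μ (Ioi (x - K)) := by
    have hfin : h ≠ ∞ := ENNReal.mul_ne_top (by norm_num) (measure_ne_top _ _)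
    refine ENNReal.le_of_add_le_add_right hfin ?_
    calc h + h = _ := hP.symm
      _ ≤ _ := (sumTail_eq_add μ K x).trans_le (add_le_add hbig hx)
  calc sumTail μ x = 2 * h := by rw [hP, two_mul]
    _ ≤ 2 * (2 * μ (Ioi (x - K))) := by gcongr
    _ = 4 * μ (Ioi (x - K)) := by rw [← mul_assoc]; norm_num

lemma exists_measure_Ioi_sub_le (hJ : MemJ μ) (hub : ∀ x, 0 < μ (Ioi x)) (a : ℝ) :
    ∃ C : ℝ≥0, ∀ᶠ x in atTop, μ (Ioi (x - a)) ≤ C * μ (Ioi x) := by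
  obtain ⟨K, hK⟩ := hJ.exists_sumTail_le hub
  have ht₀ : μ (Ioi (a + K)) ≠ 0 := (hub _).ne'
  have ht : μ (Ioi (a + K)) ≠ ∞ := measure_ne_top _ _
  obtain ⟨C, hC⟩ : ∃ C : ℝ≥0, (C : ℝ≥0∞) = 4 / μ (Ioi (a + K)) :=
    ⟨_, ENNReal.coe_toNNReal (ENNReal.div_ne_top (by norm_num) ht₀)⟩
  refine ⟨C, ?_⟩
  filter_upwards [tendsto_atTop_add_const_right atTop K tendsto_id |>.eventually hK] with x hx
  have hprod : μ (Ioi (x - a)) * μ (Ioi (a + K)) ≤ 4 * μ (Ioi x) := by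
    calc μ (Ioi (x - a)) * μ (Ioi (a + K)) = (μ.prod μ) (Ioi (x - a) ×ˢ Ioi (a + K)) :=
          (Measure.prod_prod _ _).symm
      _ ≤ sumTail μ (x + K) := measure_mono fun p ⟨h₁, h₂⟩ => by
          simp only [mem_Ioi] at h₁ h₂
          show x + K < p.1 + p.2
          linarith
      _ ≤ 4 * μ (Ioi x) := by simpa using hx
  rw [hC, ← ENNReal.mul_div_right_comm, ENNReal.le_div_iff_mul_le (.inl ht₀) (.inl ht)]
  exact hprod

lemma exists_sumTail_le_mul (hJ : MemJ μ) (hub : ∀ x, 0 < μ (Ioi x)) :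
    ∃ C : ℝ≥0, ∀ᶠ x in atTop, sumTail μ x ≤ C * μ (Ioi x) := by
  obtain ⟨K, hK⟩ := hJ.exists_sumTail_le hub
  obtain ⟨C, hC⟩ := hJ.exists_measure_Ioi_sub_le hub K
  refine ⟨4 * C, ?_⟩
  filter_upwards [hK, hC] with x h₁ h₂
  calc sumTail μ x ≤ 4 * (C * μ (Ioi x)) := h₁.trans (by gcongr)
    _ = ↑(4 * C) * μ (Ioi x) := by push_cast; ring

lemma isEventuallySmall_sumTailMinGt (hJ : MemJ μ) (hub : ∀ x, 0 < μ (Ioi x)) :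
    IsEventuallySmall (sumTailMinGt μ) (fun x => μ (Ioi x)) := by
  obtain ⟨C, hC⟩ := hJ.exists_sumTail_le_mul hub
  have hsmall : IsEventuallySmall (sumTailMaxLe μ) (fun x => μ (Ioi x)) :=
    (hJ.isEventuallySmall hub).of_le_mul (D := 1)
      (.of_forall fun _ => .of_forall fun _ => by simp) hC
  intro ε hε
  obtain ⟨K', hK'⟩ := (hsmall (ε / 2) (half_pos hε)).exists
  obtain ⟨C', hC'⟩ := hJ.exists_measure_Ioi_sub_le hub K'
  have htend : Tendsto (fun K => 2 * C' * μ (Ioi K)) atTop (𝓝 0) := by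
    simpa using ENNReal.Tendsto.const_mul (tendsto_measure_Ioi_atTop μ) (.inr (by finiteness))
  filter_upwards [(tendsto_order.1 htend).2 _ (by positivity : (0 : ℝ≥0∞) < ↑(ε / 2))] with K hK
  filter_upwards [hK', hC'] with x h₁ h₂
  calc sumTailMinGt μ K x
      ≤ (μ.prod μ) ({p | max p.1 p.2 ≤ x - K' ∧ x < p.1 + p.2} ∪ Ioi K ×ˢ Ioi (x - K')
          ∪ Ioi (x - K') ×ˢ Ioi K) := by
        refine measure_mono fun p ⟨hmin, hsum⟩ => ?_
        simp only [lt_min_iff] at hmin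
        by_cases ha : x - K' < p.1
        · exact .inr ⟨ha, hmin.2⟩
        by_cases hb : x - K' < p.2
        · exact .inl (.inr ⟨hmin.1, hb⟩)
        exact .inl (.inl ⟨max_le (not_lt.1 ha) (not_lt.1 hb), hsum⟩)
    _ ≤ sumTailMaxLe μ K' x + μ (Ioi K) * μ (Ioi (x - K')) + μ (Ioi (x - K')) * μ (Ioi K) := by
        rw [← Measure.prod_prod, ← Measure.prod_prod]
        exact (measure_union_le _ _).trans (add_le_add (measure_union_le _ _) le_rfl)
    _ ≤ ↑(ε / 2) * μ (Ioi x) + μ (Ioi K) * (C' * μ (Ioi x)) + C' * μ (Ioi x) * μ (Ioi K) := by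
        gcongr
    _ = ↑(ε / 2) * μ (Ioi x) + 2 * C' * μ (Ioi K) * μ (Ioi x) := by ring
    _ ≤ ↑(ε / 2) * μ (Ioi x) + ↑(ε / 2) * μ (Ioi x) := by gcongr
    _ = ε * μ (Ioi x) := by rw [← add_mul, ← ENNReal.coe_add, add_halves]

end MemJ

lemma sumTailMaxLe_le_sumTailMinGt (μ ν : Measure ℝ) [SFinite μ] [SFinite ν] {C : ℝ≥0} {M : ℝ}
    (hC : ∀ t ≥ M, ν (Ioi t) ≤ C * μ (Ioi t)) {K x : ℝ} (hK : M ≤ K) (hx : 2 * K ≤ x) :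
    sumTailMaxLe ν K x ≤ ((2 * C ^ 2 : ℝ≥0) : ℝ≥0∞) * sumTailMinGt μ K x := by
  set S := {p : ℝ × ℝ | p.1 ∈ Ioc (x / 2) (x - K) ∧ x - p.1 < p.2}
  set T := {p : ℝ × ℝ | p.1 ∈ Ioi K ∧ max (x / 2) (x - p.1) < p.2}
  have hS : MeasurableSet S := (measurable_fst measurableSet_Ioc).inter
    (measurableSet_lt (measurable_const.sub measurable_fst) measurable_snd)
  calc sumTailMaxLe ν K x ≤ (ν.prod ν) (S ∪ Prod.swap ⁻¹' S) := by
        refine measure_mono fun p ⟨hmax, hsum⟩ => ?_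
        rw [max_le_iff] at hmax
        by_cases h₁ : x / 2 < p.1
        · exact .inl ⟨⟨h₁, hmax.1⟩, by linarith⟩
        · exact .inr ⟨⟨(by linarith : x / 2 < p.2), hmax.2⟩, (by linarith : x - p.2 < p.1)⟩
    _ ≤ 2 * (ν.prod ν) S :=
        (measure_union_le _ _).trans_eq (by rw [prod_swap_preimage _ _ hS, two_mul])
    _ ≤ 2 * (C * (ν.prod μ) S) := by
        gcongr
        exact prod_le_mul_prod_of_tail_le ν ν μ measurableSet_Ioc (by fun_prop)
          fun a ha => hC _ (by linarith [ha.2])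
    _ = 2 * (C * (μ.prod ν) (Prod.swap ⁻¹' S)) := by rw [prod_swap_preimage _ _ hS]
    _ ≤ 2 * (C * (μ.prod ν) T) := by
        gcongr
        intro p hp
        obtain ⟨⟨h₁, h₂⟩, h₃⟩ : p.2 ∈ Ioc (x / 2) (x - K) ∧ x - p.2 < p.1 := hp
        exact ⟨(by linarith : K < p.1), max_lt h₁ (by linarith)⟩
    _ ≤ 2 * (C * (C * (μ.prod μ) T)) := by
        gcongr
        exact prod_le_mul_prod_of_tail_le μ ν μ measurableSet_Ioi
          (h := fun w => max (x / 2) (x - w)) (by fun_prop)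
          fun w _ => hC _ (by linarith [le_max_left (x / 2) (x - w)])
    _ ≤ 2 * (C * (C * sumTailMinGt μ K x)) := by
        gcongr
        refine measure_mono fun p ⟨h₁, h₂⟩ => ⟨lt_min h₁ ?_, ?_⟩
        · linarith [le_max_left (x / 2) (x - p.1)]
        · linarith [le_max_right (x / 2) (x - p.1)]
    _ = ((2 * C ^ 2 : ℝ≥0) : ℝ≥0∞) * sumTailMinGt μ K x := by push_cast; ring

theorem MemJ.of_weakTailEquiv {μ ν : Measure ℝ} [IsProbabilityMeasure μ] [IsProbabilityMeasure ν]
    (hJ : MemJ μ) (hub : ∀ x, 0 < μ (Ioi x)) (hν : ν (Iio 0) = 0) (h : WeakTailEquiv μ ν) :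
    MemJ ν := by
  obtain ⟨⟨C, hC⟩, ⟨c, hc⟩⟩ := weakTailEquiv_iff.1 h
  obtain ⟨M, hM⟩ := eventually_atTop.1 hC
  have hsum : ∀ᶠ x in atTop, μ (Ioi x) ≤ c * sumTail ν x := hc.mono fun x hx =>
    hx.trans (by gcongr; exact measure_Ioi_le_prod_sum_gt ν ν hν x)
  have hpos : ∀ᶠ x in atTop, sumTail ν x ≠ 0 := hsum.mono fun x hx h₀ =>
    (hub x).ne' (le_antisymm (by simpa [h₀] using hx) zero_le)
  refine (memJ_iff_isEventuallySmall ν hpos).2 <|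
    (hJ.isEventuallySmall_sumTailMinGt hub).of_le_mul (D := 2 * C ^ 2) ?_ hsum
  filter_upwards [eventually_ge_atTop M] with K hK
  filter_upwards [eventually_ge_atTop (2 * K)] with x hx
  exact sumTailMaxLe_le_sumTailMinGt μ ν hM hK hx

lemma conv_tail_le_of_tail_le (ρ μ : Measure ℝ) [IsProbabilityMeasure ρ] [IsProbabilityMeasure μ]
    {C C₂ : ℝ≥0} (hρ : ∀ᶠ x in atTop, ρ (Ioi x) ≤ C * μ (Ioi x))
    (hsq : ∀ᶠ x in atTop, sumTail μ x ≤ C₂ * μ (Ioi x))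
    (hlong : ∀ a, ∃ C : ℝ≥0, ∀ᶠ x in atTop, μ (Ioi (x - a)) ≤ C * μ (Ioi x)) :
    ∃ C' : ℝ≥0, ∀ᶠ x in atTop, conv ρ μ (Ioi x) ≤ C' * μ (Ioi x) := by
  obtain ⟨M, hM⟩ := eventually_atTop.1 hρ
  obtain ⟨C', hC'⟩ := hlong M
  refine ⟨C * C₂ + C', ?_⟩
  filter_upwards [hsq, hC'] with x h₁ h₂
  have hmeas : Measurable fun b => μ (Ioi (x - b)) :=
    Monotone.measurable fun b b' hb => measure_mono (Ioi_subset_Ioi (by linarith))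
  calc conv ρ μ (Ioi x) = ∫⁻ b in Iic (x - M), ρ (Ioi (x - b)) ∂μ
        + ∫⁻ b in (Iic (x - M))ᶜ, ρ (Ioi (x - b)) ∂μ := by
        rw [conv_apply_Ioi, prod_sum_gt_eq_lintegral, lintegral_add_compl _ measurableSet_Iic]
    _ ≤ ∫⁻ b, C * μ (Ioi (x - b)) ∂μ + ∫⁻ _ in Ioi (x - M), 1 ∂μ := by
        rw [compl_Iic]
        gcongr ?_ + ?_
        · exact (setLIntegral_mono (measurable_const.mul hmeas) fun b hb =>
            hM _ (by linarith [mem_Iic.1 hb])).trans (setLIntegral_le_lintegral _ _)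
        · exact setLIntegral_mono measurable_const fun _ _ => prob_le_one
    _ = C * sumTail μ x + μ (Ioi (x - M)) := by
        rw [lintegral_const_mul' _ _ ENNReal.coe_ne_top, sumTail, prod_sum_gt_eq_lintegral,
          setLIntegral_one]
    _ ≤ C * (C₂ * μ (Ioi x)) + C' * μ (Ioi x) := by gcongr
    _ = ↑(C * C₂ + C') * μ (Ioi x) := by push_cast; ring

lemma exists_nconv_tail_le (μ : Measure ℝ) [IsProbabilityMeasure μ] {C₂ : ℝ≥0}
    (hsq : ∀ᶠ x in atTop, sumTail μ x ≤ C₂ * μ (Ioi x))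
    (hlong : ∀ a, ∃ C : ℝ≥0, ∀ᶠ x in atTop, μ (Ioi (x - a)) ≤ C * μ (Ioi x)) (n : ℕ) :
    ∃ C : ℝ≥0, ∀ᶠ x in atTop, nconv μ n (Ioi x) ≤ C * μ (Ioi x) := by
  induction n with
  | zero =>
    refine ⟨0, ?_⟩
    filter_upwards [eventually_ge_atTop 0] with x hx
    simp [nconv, hx]
  | succ n ih =>
    obtain ⟨C, hC⟩ := ih
    exact conv_tail_le_of_tail_le _ μ hC hsq hlong

theorem stmt11 (μ : Measure ℝ) [IsProbabilityMeasure μ]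
    (hnn : μ (Set.Iio 0) = 0) (hub : ∀ x : ℝ, 0 < μ (Set.Ioi x))
    (hJ : MemJ μ) :
    ∀ n : ℕ, 1 ≤ n → WeakTailEquiv μ (nconv μ n) ∧ MemJ (nconv μ n) := by
  intro n hn
  obtain ⟨C₂, hsq⟩ := hJ.exists_sumTail_le_mul hub
  obtain ⟨C, hC⟩ := exists_nconv_tail_le μ hsq (hJ.exists_measure_Ioi_sub_le hub) n
  have hequiv : WeakTailEquiv μ (nconv μ n) := weakTailEquiv_iff.2
    ⟨⟨C, hC⟩, ⟨1, .of_forall fun x => by simpa using measure_Ioi_le_nconv μ hnn hn x⟩⟩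
  exact ⟨hequiv, hJ.of_weakTailEquiv hub (nconv_Iio_eq_zero μ hnn n) hequiv⟩
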